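/- Let D ⊆ ℝ² be open and let Ψ : ℝ² → 𝔹 be four times continuously differentiable on D and satisfy the Cauchy–Riemann analogue ∂Ψ/∂y(x,y) = (∂Ψ/∂x(x,y))·e₂ for all (x,y) ∈ D. Then Δ²Ψ := ∂⁴Ψ/∂x⁴ + 2·∂⁴Ψ/∂x²∂y² + ∂⁴Ψ/∂y⁴ = 0 on D; in particular each of the four real components Uⱼ[Ψ(x,y)] (j = 1,2,3,4) is a biharmonic function on D. -/

import Mathlib

/-- The biharmonic algebra `𝔹`, realized as the dual numbers over `ℂ`. -/
noncomputable abbrev 𝔹 : Type := DualNumber ℂ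

/-- The basis element `e₁ = 1` of the biharmonic algebra. -/
noncomputable def e₁ : 𝔹 := 1

/-- The basis element `e₂ = i + ε` of the biharmonic algebra. -/
noncomputable def e₂ : 𝔹 := Complex.I • 1 + DualNumber.eps

/-- First real component in the decomposition `a = U₁·e₁ + U₂·i·e₁ + U₃·e₂ + U₄·i·e₂`. -/
noncomputable def U₁ (a : 𝔹) : ℝ := a.fst.re + a.snd.im

/-- Second real component. -/
noncomputable def U₂ (a : 𝔹) : ℝ := a.fst.im - a.snd.re

/-- Third real component. -/
noncomputable def U₃ (a : 𝔹) : ℝ := a.snd.re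

/-- Fourth real component. -/
noncomputable def U₄ (a : 𝔹) : ℝ := a.snd.im

/-- Partial derivative in the `x`-direction. -/
noncomputable def pdx {E : Type*} [NormedAddCommGroup E] [NormedSpace ℝ E]
    (f : ℝ × ℝ → E) (p : ℝ × ℝ) : E := fderiv ℝ f p (1, 0)

/-- Partial derivative in the `y`-direction. -/
noncomputable def pdy {E : Type*} [NormedAddCommGroup E] [NormedSpace ℝ E]
    (f : ℝ × ℝ → E) (p : ℝ × ℝ) : E := fderiv ℝ f p (0, 1)

/-- A real-valued function is biharmonic on an open set if it is four times continuously
differentiable there and satisfies `W_xxxx + 2 W_xxyy + W_yyyy = 0`. -/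
def IsBiharmonicOn (W : ℝ × ℝ → ℝ) (D : Set (ℝ × ℝ)) : Prop :=
  ContDiffOn ℝ 4 W D ∧
    ∀ p ∈ D, pdx (pdx (pdx (pdx W))) p + 2 * pdx (pdx (pdy (pdy W))) p
      + pdy (pdy (pdy (pdy W))) p = 0

/-!
Differentiating the Cauchy–Riemann relation `∂_y Ψ = M (∂_x Ψ)`, `M a = a * e₂`, and using the
symmetry of second derivatives gives `∂_y² = M² ∂_x²` on `C²` solutions, hence
`Δ²Ψ = (1 + M²)² ∂_x⁴ Ψ`. In `𝔹` one has `1 + e₂² = 2iε`, whose square vanishes. The components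
`Uⱼ` are `ℝ`-linear, so they commute with the partial derivatives and inherit `Δ² = 0`.
-/

open Set

section DirectionalDerivative

variable {E F G : Type*} [NormedAddCommGroup E] [NormedSpace ℝ E]
  [NormedAddCommGroup F] [NormedSpace ℝ F] [NormedAddCommGroup G] [NormedSpace ℝ G]

noncomputable def pd (v : E) (f : E → F) (p : E) : F := fderiv ℝ f p v

/-- For `u = (1, 0)`, `w = (0, 1)` this unfolds to the operator of `IsBiharmonicOn`, since
`pdx = pd (1, 0)` and `pdy = pd (0, 1)` by definition. -/
noncomputable def bilaplacian (u w : E) (f : E → F) (p : E) : F :=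
  pd u (pd u (pd u (pd u f))) p + (2 : ℝ) • pd u (pd u (pd w (pd w f))) p
    + pd w (pd w (pd w (pd w f))) p

lemma ContDiffOn.pd_of_isOpen {D : Set E} (hD : IsOpen D) {f : E → F} {m n : WithTop ℕ∞}
    (hf : ContDiffOn ℝ n f D) (hmn : m + 1 ≤ n) (v : E) : ContDiffOn ℝ m (pd v f) D :=
  (ContinuousLinearMap.apply ℝ F v).contDiff.comp_contDiffOn (hf.fderiv_of_isOpen hD hmn)

lemma Set.EqOn.pd_clm_comp {D : Set E} (hD : IsOpen D) (L : F →L[ℝ] G) {f : E → G}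
    {g : E → F} (hg : DifferentiableOn ℝ g D) (h : EqOn f (L ∘ g) D) (v : E) :
    EqOn (pd v f) (L ∘ pd v g) D := by
  intro p hp
  have hfg : fderiv ℝ f p = fderiv ℝ (L ∘ g) p :=
    (Filter.eventuallyEq_of_mem (hD.mem_nhds hp) h).fderiv_eq
  simp [pd, hfg, fderiv_comp p L.differentiableAt (hg.differentiableAt (hD.mem_nhds hp)),
    L.fderiv]

lemma ContDiffAt.pd_comm {f : E → F} {p : E} (hf : ContDiffAt ℝ 2 f p) (v w : E) :
    pd v (pd w f) p = pd w (pd v f) p := by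
  have hdf : DifferentiableAt ℝ (fderiv ℝ f) p :=
    (hf.fderiv_right le_rfl).differentiableAt one_ne_zero
  have hsymm := hf.isSymmSndFDerivAt (by simp [minSmoothness_of_isRCLikeNormedField]) v w
  change fderiv ℝ (fun q => fderiv ℝ f q w) p v = fderiv ℝ (fun q => fderiv ℝ f q v) p w
  simpa [fderiv_clm_apply hdf (differentiableAt_const _)] using hsymm

variable {D : Set E} {M : F →L[ℝ] F} {u w : E} {f : E → F}

def IsMonogenicOn (M : F →L[ℝ] F) (u w : E) (f : E → F) (D : Set E) : Prop :=
  EqOn (pd w f) (M ∘ pd u f) D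

lemma IsMonogenicOn.pd_of_contDiffOn (hD : IsOpen D) (hf : ContDiffOn ℝ 2 f D)
    (hmono : IsMonogenicOn M u w f D) (v : E) : IsMonogenicOn M u w (pd v f) D := by
  intro p hp
  have hfp : ContDiffAt ℝ 2 f p := hf.contDiffAt (hD.mem_nhds hp)
  have hfu : DifferentiableOn ℝ (pd u f) D :=
    (hf.pd_of_isOpen hD (m := 1) (by norm_num) u).differentiableOn one_ne_zero
  calc pd w (pd v f) p = pd v (pd w f) p := hfp.pd_comm w v
    _ = M (pd v (pd u f) p) := hmono.pd_clm_comp hD M hfu v hp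
    _ = M (pd u (pd v f) p) := by rw [hfp.pd_comm]

lemma IsMonogenicOn.pd_pd (hD : IsOpen D) (hf : ContDiffOn ℝ 2 f D)
    (hmono : IsMonogenicOn M u w f D) : EqOn (pd w (pd w f)) ((M * M) ∘ pd u (pd u f)) D := by
  intro p hp
  calc pd w (pd w f) p = M (pd u (pd w f) p) := hmono.pd_of_contDiffOn hD hf w hp
    _ = M (pd w (pd u f) p) := by rw [(hf.contDiffAt (hD.mem_nhds hp)).pd_comm]
    _ = M (M (pd u (pd u f) p)) := by rw [hmono.pd_of_contDiffOn hD hf u hp]; rfl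

lemma IsMonogenicOn.bilaplacian_eq (hD : IsOpen D) (hf : ContDiffOn ℝ 4 f D)
    (hmono : IsMonogenicOn M u w f D) :
    EqOn (bilaplacian u w f)
      (⇑((1 + M * M) ^ 2 : F →L[ℝ] F) ∘ pd u (pd u (pd u (pd u f)))) D := by
  have hfu : ContDiffOn ℝ 3 (pd u f) D := hf.pd_of_isOpen hD (by norm_num) u
  set k := pd u (pd u f)
  have hk : ContDiffOn ℝ 2 k D := hfu.pd_of_isOpen hD (by norm_num) u
  have hk_mono : IsMonogenicOn M u w k D :=
    (hmono.pd_of_contDiffOn hD (hf.of_le (by norm_num)) u).pd_of_contDiffOn hD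
      (hfu.of_le (by norm_num)) u
  have hww : EqOn (pd w (pd w f)) ((M * M) ∘ k) D := hmono.pd_pd hD (hf.of_le (by norm_num))
  have hdiff : ∀ v, DifferentiableOn ℝ (pd v k) D := fun v =>
    (hk.pd_of_isOpen hD (m := 1) (by norm_num) v).differentiableOn one_ne_zero
  have hk_diff : DifferentiableOn ℝ k D := hk.differentiableOn (by norm_num)
  have huuww : EqOn (pd u (pd u (pd w (pd w f)))) ((M * M) ∘ pd u (pd u k)) D :=
    (hww.pd_clm_comp hD _ hk_diff u).pd_clm_comp hD _ (hdiff u) u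
  have hwwww : EqOn (pd w (pd w (pd w (pd w f)))) ((M * M) ∘ pd w (pd w k)) D :=
    (hww.pd_clm_comp hD _ hk_diff w).pd_clm_comp hD _ (hdiff w) w
  intro p hp
  simp only [bilaplacian, huuww hp, hwwww hp, hk_mono.pd_pd hD hk hp, Function.comp_apply, sq,
    mul_add, add_mul, one_mul, mul_one, add_apply, one_apply_eq_self, mul_apply_eq_comp]
  module

lemma ContDiffOn.eqOn_pd_pd_pd_pd_clm_comp (hD : IsOpen D) (hf : ContDiffOn ℝ 4 f D)
    (L : F →L[ℝ] G) (v₁ v₂ v₃ v₄ : E) :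
    EqOn (pd v₁ (pd v₂ (pd v₃ (pd v₄ (L ∘ f))))) (L ∘ pd v₁ (pd v₂ (pd v₃ (pd v₄ f)))) D := by
  have hf₃ : ContDiffOn ℝ 3 (pd v₄ f) D := hf.pd_of_isOpen hD (by norm_num) v₄
  have hf₂ : ContDiffOn ℝ 2 (pd v₃ (pd v₄ f)) D := hf₃.pd_of_isOpen hD (by norm_num) v₃
  have hf₁ : ContDiffOn ℝ 1 (pd v₂ (pd v₃ (pd v₄ f))) D :=
    hf₂.pd_of_isOpen hD (by norm_num) v₂
  exact ((((eqOn_refl (L ∘ f) D).pd_clm_comp hD L (hf.differentiableOn (by norm_num)) v₄)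
    |>.pd_clm_comp hD L (hf₃.differentiableOn (by norm_num)) v₃)
    |>.pd_clm_comp hD L (hf₂.differentiableOn (by norm_num)) v₂)
    |>.pd_clm_comp hD L (hf₁.differentiableOn (by norm_num)) v₁

lemma ContDiffOn.bilaplacian_clm_comp (hD : IsOpen D) (hf : ContDiffOn ℝ 4 f D)
    (L : F →L[ℝ] G) (u w : E) :
    EqOn (bilaplacian u w (L ∘ f)) (L ∘ bilaplacian u w f) D := by
  intro p hp
  simp only [bilaplacian, Function.comp_apply, map_add, map_smul,
    hf.eqOn_pd_pd_pd_pd_clm_comp hD L _ _ _ _ hp]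

lemma isBiharmonicOn_clm_comp {D : Set (ℝ × ℝ)} (hD : IsOpen D) {f : ℝ × ℝ → F}
    (hf : ContDiffOn ℝ 4 f D) (hΔ : ∀ p ∈ D, bilaplacian (1, 0) (0, 1) f p = 0)
    (L : F →L[ℝ] ℝ) : IsBiharmonicOn (L ∘ f) D := by
  refine ⟨L.contDiff.comp_contDiffOn hf, fun p hp => ?_⟩
  have h := hf.bilaplacian_clm_comp hD L (1, 0) (0, 1) hp
  rw [Function.comp_apply, hΔ p hp, map_zero] at h
  exact h

end DirectionalDerivative

lemma one_add_e₂_mul_e₂_sq : (1 + e₂ * e₂) ^ 2 = 0 := by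
  have h : 1 + e₂ * e₂ = (2 * Complex.I) • DualNumber.eps := by
    ext <;> simp [e₂, two_mul]
  rw [h, sq, smul_mul_smul_comm, DualNumber.eps_mul_eps, smul_zero]

noncomputable def mulRightE₂ : 𝔹 →L[ℝ] 𝔹 := (ContinuousLinearMap.mul ℝ 𝔹).flip e₂

lemma one_add_mulRightE₂_sq_sq : (1 + mulRightE₂ * mulRightE₂) ^ 2 = 0 := by
  ext1 a
  have : ((1 + mulRightE₂ * mulRightE₂) ^ 2 : 𝔹 →L[ℝ] 𝔹) a = a * (1 + e₂ * e₂) ^ 2 := by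
    simp only [mulRightE₂, ContinuousLinearMap.flip_mul, sq, mul_apply_eq_comp, add_apply,
      one_apply_eq_self, ContinuousLinearMap.mul_apply']
    ring
  rw [this, one_add_e₂_mul_e₂_sq, mul_zero, zero_apply]

noncomputable def fstℝ : 𝔹 →L[ℝ] ℂ := (TrivSqZeroExt.fstCLM ℂ ℂ).restrictScalars ℝ

noncomputable def sndℝ : 𝔹 →L[ℝ] ℂ := (TrivSqZeroExt.sndCLM ℂ ℂ).restrictScalars ℝ

/-- If `Ψ : ℝ² → 𝔹` is `C⁴` on an open set `D` and satisfies the Cauchy–Riemann analogue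
`∂Ψ/∂y = (∂Ψ/∂x)·e₂` on `D`, then `Δ²Ψ = 0` on `D`; in particular each of the four real
components `Uⱼ[Ψ]` is biharmonic on `D`. -/
theorem monogenic_components_biharmonic
    (D : Set (ℝ × ℝ)) (hD : IsOpen D) (Ψ : ℝ × ℝ → 𝔹)
    (hC4 : ContDiffOn ℝ 4 Ψ D)
    (hCR : ∀ p ∈ D, pdy Ψ p = pdx Ψ p * e₂) :
    (∀ p ∈ D, pdx (pdx (pdx (pdx Ψ))) p + (2 : ℝ) • pdx (pdx (pdy (pdy Ψ))) p
        + pdy (pdy (pdy (pdy Ψ))) p = 0) ∧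
    IsBiharmonicOn (fun p => U₁ (Ψ p)) D ∧
    IsBiharmonicOn (fun p => U₂ (Ψ p)) D ∧
    IsBiharmonicOn (fun p => U₃ (Ψ p)) D ∧
    IsBiharmonicOn (fun p => U₄ (Ψ p)) D := by
  have hmono : IsMonogenicOn mulRightE₂ (1, 0) (0, 1) Ψ D := hCR
  have hΔ : ∀ p ∈ D, bilaplacian (1, 0) (0, 1) Ψ p = 0 := fun p hp => by
    rw [hmono.bilaplacian_eq hD hC4 hp, Function.comp_apply, one_add_mulRightE₂_sq_sq, zero_apply]
  exact ⟨hΔ,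
    isBiharmonicOn_clm_comp hD hC4 hΔ (Complex.reCLM.comp fstℝ + Complex.imCLM.comp sndℝ),
    isBiharmonicOn_clm_comp hD hC4 hΔ (Complex.imCLM.comp fstℝ - Complex.reCLM.comp sndℝ),
    isBiharmonicOn_clm_comp hD hC4 hΔ (Complex.reCLM.comp sndℝ),
    isBiharmonicOn_clm_comp hD hC4 hΔ (Complex.imCLM.comp sndℝ)⟩
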